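/- Uniform concentration over contiguous blocks: let (H_{t-1}, F_t)_{t=1}^n be a two-stage filtration with n ≥ 1. For each t, let w_t be an H_{t-1}-measurable random variable with w_t ∈ [0,1] a.s., let y_t be an F_t-measurable random variable with y_t ∈ [0,1] a.s., and set μ_t := E[y_t | H_{t-1}]. Then for every δ ∈ (0,1), with probability at least 1 - δ, simultaneously for every contiguous block S = {a, a+1, ..., b} ⊆ {1,...,n}: |∑_{t∈S} w_t (y_t - μ_t)| ≤ 4 ( √( Λ ∑_{t∈S} w_t ) + Λ ), where Λ := log( 2 n² (⌈log₂ n⌉ + 1)/δ ). -/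

import Mathlib

open MeasureTheory

section Aux
open Real

lemma exp_quad {u : ℝ} (hu : |u| ≤ 1) : Real.exp u ≤ 1 + u + u ^ 2 := by
  have h := Real.exp_bound hu (by norm_num : 0 < 2)
  have h2 : ∑ i ∈ Finset.range 2, u ^ i / (Nat.factorial i : ℝ) = 1 + u := by
    simp [Finset.sum_range_succ]
  rw [h2] at h
  have habs : Real.exp u - (1 + u) ≤ |u| ^ 2 * ((2:ℕ).succ / ((Nat.factorial 2 : ℝ) * 2)) :=
    (le_abs_self _).trans h
  have : |u| ^ 2 * ((2:ℕ).succ / ((Nat.factorial 2 : ℝ) * 2)) ≤ u ^ 2 := by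
    rw [sq_abs]
    norm_num [Nat.factorial]
    nlinarith [sq_nonneg u]
  linarith

lemma chord {u z : ℝ} (h0 : 0 ≤ z) (h1 : z ≤ 1) :
    Real.exp (u * z) ≤ 1 - z + z * Real.exp u := by
  have := convexOn_exp.2 (Set.mem_univ 0) (Set.mem_univ u) (by linarith : (0:ℝ) ≤ 1 - z) h0
    (by ring)
  simpa [mul_comm] using this

lemma mgf_pt {u p : ℝ} (hu : |u| ≤ 1) (hp0 : 0 ≤ p) (hp1 : p ≤ 1) :
    Real.exp (-(u * p)) * (1 - p + p * Real.exp u) ≤ Real.exp (u ^ 2) := by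
  have hq : 1 - p + p * Real.exp u = 1 + p * (Real.exp u - 1) := by ring
  have h1 : 1 - p + p * Real.exp u ≤ Real.exp (p * (Real.exp u - 1)) := by
    rw [hq]; exact Real.add_one_le_exp _ |>.trans_eq' (by ring_nf)
  have hpos : (0:ℝ) ≤ 1 - p + p * Real.exp u := by nlinarith [Real.exp_pos u]
  calc Real.exp (-(u * p)) * (1 - p + p * Real.exp u)
      ≤ Real.exp (-(u * p)) * Real.exp (p * (Real.exp u - 1)) := by
        exact mul_le_mul_of_nonneg_left h1 (Real.exp_pos _).le
    _ = Real.exp (p * (Real.exp u - 1 - u)) := by rw [← Real.exp_add]; ring_nf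
    _ ≤ Real.exp (u ^ 2) := by
        apply Real.exp_le_exp.2
        have h2 : Real.exp u - 1 - u ≥ 0 := by nlinarith [Real.add_one_le_exp u]
        have h3 : Real.exp u - 1 - u ≤ u ^ 2 := by have := exp_quad hu; linarith
        nlinarith

variable {Ω : Type*} {m0 : MeasurableSpace Ω} {μ : Measure Ω} [IsProbabilityMeasure μ]

lemma integrable_of_bdd' {f : Ω → ℝ} (hf : AEStronglyMeasurable f μ) {C : ℝ}
    (h : ∀ᵐ ω ∂μ, |f ω| ≤ C) : Integrable f μ :=
  (integrable_const C).mono' hf (by simpa [Real.norm_eq_abs] using h)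

example {m : MeasurableSpace Ω} (hm : m ≤ m0) : SigmaFinite (μ.trim hm) := by
  infer_instance

lemma condMGF {m : MeasurableSpace Ω} (hm : m ≤ m0) (v y : Ω → ℝ)
    (hv : Measurable[m] v) (hvbdd : ∀ᵐ ω ∂μ, |v ω| ≤ 1)
    (hy : Measurable[m0] y) (hybdd : ∀ᵐ ω ∂μ, y ω ∈ Set.Icc (0:ℝ) 1) :
    μ[fun ω => Real.exp (v ω * (y ω - (μ[y|m]) ω)) | m]
      ≤ᵐ[μ] fun ω => Real.exp ((v ω) ^ 2) := by
  set p : Ω → ℝ := μ[y|m] with hp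
  have hvm0 : Measurable[m0] v := hv.mono hm le_rfl
  have hpm : StronglyMeasurable[m] p := stronglyMeasurable_condExp
  have hpm0 : Measurable[m0] p := (hpm.mono hm).measurable
  have hyint : Integrable y μ := integrable_of_bdd' hy.aestronglyMeasurable
    (C := 1) (hybdd.mono fun ω h => abs_le.2 ⟨by linarith [h.1], h.2⟩)
  have hp0 : 0 ≤ᵐ[μ] p := condExp_nonneg (hybdd.mono fun ω h => h.1)
  have hp1 : p ≤ᵐ[μ] fun _ => (1:ℝ) := by
    have h := condExp_mono (m := m) hyint (integrable_const (1:ℝ))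
      (hybdd.mono fun ω h => h.2)
    refine h.trans ?_
    rw [condExp_const hm]
  have hp0' : ∀ᵐ ω ∂μ, 0 ≤ p ω := by
    filter_upwards [hp0] with ω h using h
  -- Z ≤ G pointwise a.e.
  set Z : Ω → ℝ := fun ω => Real.exp (v ω * (y ω - p ω)) with hZ
  set g₁ : Ω → ℝ := fun ω => Real.exp (-(v ω * p ω)) with hg₁
  set g₃ : Ω → ℝ := fun ω => Real.exp (v ω - v ω * p ω) with hg₃
  set G : Ω → ℝ := fun ω => g₁ ω + (g₃ ω - g₁ ω) * y ω with hG
  have hg₁m : Measurable[m] g₁ := (hv.mul hpm.measurable).neg.exp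
  have hg₃m : Measurable[m] g₃ := (hv.sub (hv.mul hpm.measurable)).exp
  have hZG : ∀ᵐ ω ∂μ, Z ω ≤ G ω := by
    filter_upwards [hybdd] with ω hy01
    have : Z ω = g₁ ω * Real.exp (v ω * y ω) := by
      rw [hZ, hg₁, ← Real.exp_add]; ring_nf
    rw [this]
    have hch := chord (u := v ω) hy01.1 hy01.2
    calc g₁ ω * Real.exp (v ω * y ω) ≤ g₁ ω * (1 - y ω + y ω * Real.exp (v ω)) :=
          mul_le_mul_of_nonneg_left hch (Real.exp_pos _).le
      _ = G ω := by
          have h3 : g₃ ω = Real.exp (v ω) * g₁ ω := by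
            simp only [hg₃, hg₁, ← Real.exp_add]; ring_nf
          simp only [hG]; rw [h3]; ring
  -- boundedness
  have hvb2 : ∀ᵐ ω ∂μ, |v ω * p ω| ≤ 1 := by
    filter_upwards [hvbdd, hp0', hp1] with ω h1 h2 h3
    rw [abs_mul]
    calc |v ω| * |p ω| ≤ 1 * 1 := by
          apply mul_le_mul h1 (abs_le.2 ⟨by linarith, h3⟩) (abs_nonneg _) zero_le_one
      _ = 1 := by ring
  have hg₁b : ∀ᵐ ω ∂μ, |g₁ ω| ≤ Real.exp 1 := by
    filter_upwards [hvb2] with ω h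
    rw [abs_of_pos (Real.exp_pos _)]
    obtain ⟨ha, hb⟩ := abs_le.1 h
    exact Real.exp_le_exp.2 (by linarith)
  have hg₃b : ∀ᵐ ω ∂μ, |g₃ ω| ≤ Real.exp 2 := by
    filter_upwards [hvb2, hvbdd] with ω h h2
    rw [abs_of_pos (Real.exp_pos _)]
    refine Real.exp_le_exp.2 ?_
    obtain ⟨ha, hb⟩ := abs_le.1 h
    obtain ⟨hc, hd⟩ := abs_le.1 h2
    linarith
  have hZb : ∀ᵐ ω ∂μ, |Z ω| ≤ Real.exp 2 := by
    filter_upwards [hvbdd, hybdd, hp0', hp1] with ω h1 h2 h3 h4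
    rw [abs_of_pos (Real.exp_pos _)]
    refine Real.exp_le_exp.2 ?_
    have : |v ω * (y ω - p ω)| ≤ 2 := by
      rw [abs_mul]
      calc |v ω| * |y ω - p ω| ≤ 1 * 2 := by
            apply mul_le_mul h1 (abs_le.2 ⟨by linarith [h2.1], by linarith [h2.2]⟩)
              (abs_nonneg _) zero_le_one
        _ = 2 := by ring
    linarith [(abs_le.1 this).2]
  have hGb : ∀ᵐ ω ∂μ, |G ω| ≤ Real.exp 1 + 2 * Real.exp 2 + 2 * Real.exp 1 := by
    filter_upwards [hg₁b, hg₃b, hybdd] with ω h1 h3 h2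
    have hy1 : |y ω| ≤ 1 := abs_le.2 ⟨by linarith [h2.1], h2.2⟩
    calc |G ω| ≤ |g₁ ω| + |(g₃ ω - g₁ ω) * y ω| := abs_add_le _ _
      _ ≤ Real.exp 1 + (Real.exp 2 + Real.exp 1) * 1 := by
          rw [abs_mul]
          gcongr
          exact (abs_sub _ _).trans (by linarith)
      _ ≤ _ := by linarith [Real.exp_pos (1:ℝ), Real.exp_pos (2:ℝ)]
  have hZint : Integrable Z μ := integrable_of_bdd'
    ((hvm0.mul (hy.sub hpm0)).exp.aestronglyMeasurable) hZb
  have hGint : Integrable G μ := integrable_of_bdd'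
    (((hg₁m.mono hm le_rfl).add (((hg₃m.mono hm le_rfl).sub
      (hg₁m.mono hm le_rfl)).mul hy)).aestronglyMeasurable) hGb
  have hg₁int : Integrable g₁ μ := integrable_of_bdd'
    (hg₁m.mono hm le_rfl).aestronglyMeasurable hg₁b
  have hmulint : Integrable (fun ω => (g₃ ω - g₁ ω) * y ω) μ := integrable_of_bdd'
    (((hg₃m.mono hm le_rfl).sub (hg₁m.mono hm le_rfl)).mul hy).aestronglyMeasurable
    (by filter_upwards [hg₁b, hg₃b, hybdd] with ω h1 h3 h2
        rw [abs_mul]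
        calc |g₃ ω - g₁ ω| * |y ω| ≤ (Real.exp 2 + Real.exp 1) * 1 := by
              apply mul_le_mul ((abs_sub _ _).trans (by linarith))
                (abs_le.2 ⟨by linarith [h2.1], h2.2⟩) (abs_nonneg _)
                (by positivity)
          _ = Real.exp 2 + Real.exp 1 := by ring)
  -- condexp computation
  have h1 : μ[Z|m] ≤ᵐ[μ] μ[G|m] := condExp_mono hZint hGint hZG
  have h2 : μ[G|m] =ᵐ[μ] fun ω => g₁ ω + (g₃ ω - g₁ ω) * p ω := by
    have hadd : μ[G|m] =ᵐ[μ] μ[g₁|m] + μ[fun ω => (g₃ ω - g₁ ω) * y ω|m] :=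
      condExp_add hg₁int hmulint m
    have hc1 : μ[g₁|m] = g₁ := condExp_of_stronglyMeasurable hm
      (hg₁m.stronglyMeasurable) hg₁int
    have hc2 : μ[(fun ω => (g₃ ω - g₁ ω)) * y|m] =ᵐ[μ] (fun ω => (g₃ ω - g₁ ω)) * μ[y|m] :=
      condExp_mul_of_stronglyMeasurable_left (hg₃m.sub hg₁m).stronglyMeasurable
        (by exact hmulint) hyint
    refine hadd.trans ?_
    have : μ[fun ω => (g₃ ω - g₁ ω) * y ω|m] =ᵐ[μ] fun ω => (g₃ ω - g₁ ω) * p ω := by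
      exact hc2
    filter_upwards [this] with ω hω
    simp [hc1, hω]
  refine h1.trans (h2.trans_le ?_)
  filter_upwards [hvbdd, hp0', hp1] with ω h1 h2 h3
  have : g₁ ω + (g₃ ω - g₁ ω) * p ω
      = Real.exp (-(v ω * p ω)) * (1 - p ω + p ω * Real.exp (v ω)) := by
    have h3 : g₃ ω = Real.exp (v ω) * g₁ ω := by
      simp only [hg₃, hg₁, ← Real.exp_add]; ring_nf
    simp only [hg₁] at h3 ⊢
    rw [h3]; ring
  rw [this]
  exact mgf_pt h1 h2 h3

lemma step_lemma {m : MeasurableSpace Ω} (hm : m ≤ m0) (X v y : Ω → ℝ)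
    (hX : Measurable[m] X) (hX0 : ∀ᵐ ω ∂μ, 0 ≤ X ω) {CX : ℝ}
    (hXb : ∀ᵐ ω ∂μ, |X ω| ≤ CX)
    (hv : Measurable[m] v) (hvbdd : ∀ᵐ ω ∂μ, |v ω| ≤ 1)
    (hy : Measurable[m0] y) (hybdd : ∀ᵐ ω ∂μ, y ω ∈ Set.Icc (0:ℝ) 1) :
    ∫ ω, X ω * Real.exp (v ω * (y ω - (μ[y|m]) ω)) ∂μ
      ≤ ∫ ω, X ω * Real.exp ((v ω) ^ 2) ∂μ := by
  set p : Ω → ℝ := μ[y|m] with hp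
  set Z : Ω → ℝ := fun ω => Real.exp (v ω * (y ω - p ω)) with hZdef
  have hvm0 : Measurable[m0] v := hv.mono hm le_rfl
  have hXm0 : Measurable[m0] X := hX.mono hm le_rfl
  have hpm0 : Measurable[m0] p := (stronglyMeasurable_condExp.mono hm).measurable
  have hZm0 : Measurable[m0] Z := (hvm0.mul (hy.sub hpm0)).exp
  have hp0' : ∀ᵐ ω ∂μ, 0 ≤ p ω := by
    filter_upwards [condExp_nonneg (hybdd.mono fun ω h => h.1)] with ω h using h
  have hyint : Integrable y μ := integrable_of_bdd' hy.aestronglyMeasurable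
    (C := 1) (hybdd.mono fun ω h => abs_le.2 ⟨by linarith [h.1], h.2⟩)
  have hp1' : ∀ᵐ ω ∂μ, p ω ≤ 1 := by
    have h := condExp_mono (m := m) hyint (integrable_const (1:ℝ))
      (hybdd.mono fun ω h => h.2)
    rw [condExp_const hm] at h
    exact h
  have hZb : ∀ᵐ ω ∂μ, |Z ω| ≤ Real.exp 2 := by
    filter_upwards [hvbdd, hybdd, hp0', hp1'] with ω h1 h2 h3 h4
    rw [abs_of_pos (Real.exp_pos _)]
    refine Real.exp_le_exp.2 ?_
    have habs : |v ω * (y ω - p ω)| ≤ 2 := by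
      rw [abs_mul]
      calc |v ω| * |y ω - p ω| ≤ 1 * 2 := by
            apply mul_le_mul h1 (abs_le.2 ⟨by linarith [h2.1], by linarith [h2.2]⟩)
              (abs_nonneg _) zero_le_one
        _ = 2 := by ring
    linarith [(abs_le.1 habs).2]
  have hZint : Integrable Z μ := integrable_of_bdd' hZm0.aestronglyMeasurable hZb
  have hXZint : Integrable (X * Z) μ := integrable_of_bdd'
    (hXm0.mul hZm0).aestronglyMeasurable (C := CX * Real.exp 2)
    (by filter_upwards [hXb, hZb, hX0] with ω h1 h2 h3
        rw [Pi.mul_apply, abs_mul]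
        exact mul_le_mul h1 h2 (abs_nonneg _) ((abs_nonneg _).trans h1))
  have hcond : μ[X * Z|m] =ᵐ[μ] X * μ[Z|m] :=
    condExp_mul_of_stronglyMeasurable_left hX.stronglyMeasurable hXZint hZint
  have hmgf := condMGF (μ := μ) hm v y hv hvbdd hy hybdd
  have hcondZb : ∀ᵐ ω ∂μ, |(μ[Z|m]) ω| ≤ Real.exp 2 := by
    have h1 : μ[Z|m] ≤ᵐ[μ] fun _ => Real.exp 2 := by
      have := condExp_mono (m := m) hZint (integrable_const (Real.exp 2))
        (hZb.mono fun ω h => (abs_le.1 h).2)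
      rwa [condExp_const hm] at this
    have h2 : (fun _ => -Real.exp 2 : Ω → ℝ) ≤ᵐ[μ] μ[Z|m] := by
      have := condExp_mono (m := m) (integrable_const (-Real.exp 2)) hZint
        (hZb.mono fun ω h => show -Real.exp 2 ≤ Z ω from (abs_le.1 h).1)
      rwa [condExp_const hm] at this
    filter_upwards [h1, h2] with ω ha hb
    exact abs_le.2 ⟨hb, ha⟩
  calc ∫ ω, X ω * Z ω ∂μ = ∫ ω, (μ[X * Z|m]) ω ∂μ := (integral_condExp hm (f := X * Z)).symm
    _ = ∫ ω, X ω * (μ[Z|m]) ω ∂μ := integral_congr_ae hcond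
    _ ≤ ∫ ω, X ω * Real.exp ((v ω) ^ 2) ∂μ := by
        apply integral_mono_ae
        · exact integrable_of_bdd' (hXm0.mul
            (stronglyMeasurable_condExp.mono hm).measurable).aestronglyMeasurable
            (C := CX * Real.exp 2)
            (by filter_upwards [hXb, hcondZb, hX0] with ω h1 h2 h3
                rw [abs_mul]
                exact mul_le_mul h1 h2 (abs_nonneg _) ((abs_nonneg _).trans h1))
        · exact integrable_of_bdd' (hXm0.mul (hvm0.pow_const 2).exp).aestronglyMeasurable
            (C := CX * Real.exp 1)
            (by filter_upwards [hXb, hvbdd, hX0] with ω h1 h2 h3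
                rw [abs_mul]
                refine mul_le_mul h1 ?_ (abs_nonneg _) ((abs_nonneg _).trans h1)
                rw [abs_of_pos (Real.exp_pos _)]
                refine Real.exp_le_exp.2 ?_
                calc (v ω)^2 = |v ω|^2 := (sq_abs _).symm
                  _ ≤ 1 := by nlinarith [abs_nonneg (v ω)]
                  _ = 1 := rfl)
        · filter_upwards [hmgf, hX0] with ω h1 h2
          exact mul_le_mul_of_nonneg_left h1 h2

section Chain

variable {n : ℕ} {H F : ℕ → MeasurableSpace Ω} {w y : ℕ → Ω → ℝ}

lemma Hmono (hH : ∀ t, t ≤ n → H t ≤ m0)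
    (hHF : ∀ t, 1 ≤ t → t ≤ n → H (t - 1) ≤ F t)
    (hFH : ∀ t, 1 ≤ t → t ≤ n → F t ≤ H t) :
    ∀ t, t ≤ n → ∀ s, s ≤ t → H s ≤ H t := by
  intro t
  induction t with
  | zero => intro _ s hs; interval_cases s; exact le_rfl
  | succ b ih =>
    intro hbn s hs
    rcases Nat.eq_or_lt_of_le hs with h | h
    · subst h; exact le_rfl
    · have h1 : H s ≤ H b := ih (by omega) s (by omega)
      have h2 : H b ≤ F (b+1) := by
        have := hHF (b+1) (by omega) hbn
        simpa using this
      exact h1.trans (h2.trans (hFH (b+1) (by omega) hbn))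

lemma chain_lemma (hn : 1 ≤ n)
    (hH : ∀ t, t ≤ n → H t ≤ m0)
    (hHF : ∀ t, 1 ≤ t → t ≤ n → H (t - 1) ≤ F t)
    (hFH : ∀ t, 1 ≤ t → t ≤ n → F t ≤ H t)
    (hwmeas : ∀ t, 1 ≤ t → t ≤ n → Measurable[H (t - 1)] (w t))
    (hwbdd : ∀ t, 1 ≤ t → t ≤ n → ∀ᵐ ω ∂μ, w t ω ∈ Set.Icc (0 : ℝ) 1)
    (hymeas : ∀ t, 1 ≤ t → t ≤ n → Measurable[F t] (y t))
    (hybdd : ∀ t, 1 ≤ t → t ≤ n → ∀ᵐ ω ∂μ, y t ω ∈ Set.Icc (0 : ℝ) 1)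
    (c : ℝ) (hc : |c| ≤ 1) (a : ℕ) (ha : 1 ≤ a) :
    ∀ b, b ≤ n → ∫ ω, Real.exp (∑ t ∈ Finset.Icc a b,
        (c * w t ω * (y t ω - (μ[y t|H (t - 1)]) ω) - c ^ 2 * (w t ω) ^ 2)) ∂μ ≤ 1 := by
  have hmono := Hmono hH hHF hFH
  -- ambient measurability of each term
  have hwm0 : ∀ t, 1 ≤ t → t ≤ n → Measurable[m0] (w t) := fun t h1 h2 =>
    (hwmeas t h1 h2).mono ((hH (t-1) (by omega))) le_rfl
  have hym0 : ∀ t, 1 ≤ t → t ≤ n → Measurable[m0] (y t) := fun t h1 h2 =>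
    (hymeas t h1 h2).mono ((hFH t h1 h2).trans (hH t h2)) le_rfl
  have hpm0 : ∀ t, Measurable[m0] (μ[y t|H (t-1)]) := by
    intro t
    by_cases hle : H (t-1) ≤ m0
    · exact (stronglyMeasurable_condExp.mono hle).measurable
    · rw [condExp_of_not_le hle]; exact measurable_const
  -- good events
  have hgood : ∀ᵐ ω ∂μ, ∀ t, 1 ≤ t → t ≤ n →
      w t ω ∈ Set.Icc (0:ℝ) 1 ∧ y t ω ∈ Set.Icc (0:ℝ) 1 ∧
        (μ[y t|H (t-1)]) ω ∈ Set.Icc (0:ℝ) 1 := by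
    rw [ae_all_iff]
    intro t
    by_cases ht : 1 ≤ t ∧ t ≤ n
    · have hyint : Integrable (y t) μ := integrable_of_bdd'
        (hym0 t ht.1 ht.2).aestronglyMeasurable (C := 1)
        ((hybdd t ht.1 ht.2).mono fun ω h => abs_le.2 ⟨by linarith [h.1], h.2⟩)
      have hp0 : ∀ᵐ ω ∂μ, 0 ≤ (μ[y t|H (t-1)]) ω := by
        filter_upwards [condExp_nonneg (m := H (t-1))
          ((hybdd t ht.1 ht.2).mono fun ω h => h.1)] with ω h using h
      have hp1 : ∀ᵐ ω ∂μ, (μ[y t|H (t-1)]) ω ≤ 1 := by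
        have h := condExp_mono (m := H (t-1)) hyint (integrable_const (1:ℝ))
          ((hybdd t ht.1 ht.2).mono fun ω h => h.2)
        rwa [condExp_const (hH (t-1) (by omega))] at h
      filter_upwards [hwbdd t ht.1 ht.2, hybdd t ht.1 ht.2, hp0, hp1] with ω h1 h2 h3 h4
      exact fun _ _ => ⟨h1, h2, ⟨h3, h4⟩⟩
    · filter_upwards with ω h1 h2
      exact absurd ⟨h1, h2⟩ ht
  -- induction
  intro b
  induction b with
  | zero =>
    intro _
    rw [Finset.Icc_eq_empty (by omega)]
    simp
  | succ b ih =>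
    intro hbn
    rcases lt_or_ge (b+1) a with hlt | hab
    · rw [Finset.Icc_eq_empty (by omega)]
      simp
    · have hbn' : b ≤ n := by omega
      have hmB : H b ≤ m0 := hH b hbn'
      set p : Ω → ℝ := μ[y (b+1)|H b] with hpdef
      set S : Ω → ℝ := fun ω => ∑ t ∈ Finset.Icc a b,
        (c * w t ω * (y t ω - (μ[y t|H (t - 1)]) ω) - c ^ 2 * (w t ω) ^ 2) with hSdef
      set X : Ω → ℝ := fun ω => Real.exp (S ω - c ^ 2 * (w (b+1) ω) ^ 2) with hXdef
      set v : Ω → ℝ := fun ω => c * w (b+1) ω with hvdef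
      have hSm : Measurable[H b] S := by
        apply Finset.measurable_sum
        intro t ht
        rw [Finset.mem_Icc] at ht
        have h1t : 1 ≤ t := le_trans ha ht.1
        have htb : t ≤ b := ht.2
        have hwm : Measurable[H b] (w t) :=
          (hwmeas t h1t (by omega)).mono (hmono b hbn' (t-1) (by omega)) le_rfl
        have hym : Measurable[H b] (y t) :=
          ((hymeas t h1t (by omega)).mono (hFH t h1t (by omega)) le_rfl).mono
            (hmono b hbn' t htb) le_rfl
        have hpm : Measurable[H b] (μ[y t|H (t-1)]) :=
          (stronglyMeasurable_condExp.mono (hmono b hbn' (t-1) (by omega))).measurable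
        exact ((measurable_const.mul hwm).mul (hym.sub hpm)).sub
          ((measurable_const.mul (hwm.pow_const 2)))
      have hw1m : Measurable[H b] (w (b+1)) := by
        have := hwmeas (b+1) (by omega) hbn
        simpa using this
      have hXm : Measurable[H b] X :=
        (hSm.sub (measurable_const.mul (hw1m.pow_const 2))).exp
      have hvm : Measurable[H b] v := measurable_const.mul hw1m
      have hSb : ∀ᵐ ω ∂μ, |S ω| ≤ 2 * n := by
        filter_upwards [hgood] with ω hω
        calc |S ω| ≤ ∑ t ∈ Finset.Icc a b,
            |c * w t ω * (y t ω - (μ[y t|H (t - 1)]) ω) - c ^ 2 * (w t ω) ^ 2| :=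
              Finset.abs_sum_le_sum_abs _ _
          _ ≤ ∑ t ∈ Finset.Icc a b, 2 := by
              apply Finset.sum_le_sum
              intro t ht
              rw [Finset.mem_Icc] at ht
              obtain ⟨hw01, hy01, hp01⟩ := hω t (by omega) (by omega)
              have h1 : |c * w t ω * (y t ω - (μ[y t|H (t - 1)]) ω)| ≤ 1 := by
                rw [abs_mul, abs_mul]
                have e1 : |w t ω| ≤ 1 := abs_le.2 ⟨by linarith [hw01.1], hw01.2⟩
                have e2 : |y t ω - (μ[y t|H (t - 1)]) ω| ≤ 1 :=
                  abs_le.2 ⟨by linarith [hy01.1, hp01.2], by linarith [hy01.2, hp01.1]⟩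
                calc |c| * |w t ω| * |y t ω - (μ[y t|H (t - 1)]) ω| ≤ 1 * 1 * 1 := by
                      apply mul_le_mul (mul_le_mul hc e1 (abs_nonneg _) (by linarith [abs_nonneg c]))
                        e2 (abs_nonneg _) (by norm_num)
                  _ = 1 := by ring
              have h2 : |c ^ 2 * (w t ω) ^ 2| ≤ 1 := by
                rw [abs_of_nonneg (by positivity : (0:ℝ) ≤ c ^ 2 * (w t ω) ^ 2)]
                have e1 : c ^ 2 ≤ 1 := by nlinarith [sq_abs c, abs_nonneg c]
                nlinarith [hw01.1, hw01.2, sq_nonneg (w t ω)]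
              calc |c * w t ω * (y t ω - (μ[y t|H (t - 1)]) ω) - c ^ 2 * (w t ω) ^ 2|
                  ≤ |c * w t ω * (y t ω - (μ[y t|H (t - 1)]) ω)| + |c ^ 2 * (w t ω) ^ 2| :=
                    abs_sub _ _
                _ ≤ 2 := by linarith
          _ = (Finset.Icc a b).card * 2 := by rw [Finset.sum_const, nsmul_eq_mul]
          _ ≤ n * 2 := by
              have : (Finset.Icc a b).card ≤ n := by
                rw [Nat.card_Icc]
                omega
              exact_mod_cast Nat.mul_le_mul_right 2 this
          _ = 2 * n := by ring
      have hXb : ∀ᵐ ω ∂μ, |X ω| ≤ Real.exp (2 * n) := by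
        filter_upwards [hSb, hgood] with ω h1 h2
        rw [hXdef, abs_of_pos (Real.exp_pos _)]
        apply Real.exp_le_exp.2
        obtain ⟨hw01, _, _⟩ := h2 (b+1) (by omega) hbn
        have : 0 ≤ c ^ 2 * (w (b+1) ω) ^ 2 := by positivity
        linarith [(abs_le.1 h1).2]
      have hvbdd : ∀ᵐ ω ∂μ, |v ω| ≤ 1 := by
        filter_upwards [hgood] with ω h
        obtain ⟨hw01, _, _⟩ := h (b+1) (by omega) hbn
        rw [hvdef, abs_mul]
        calc |c| * |w (b+1) ω| ≤ 1 * 1 :=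
              mul_le_mul hc (abs_le.2 ⟨by linarith [hw01.1], hw01.2⟩) (abs_nonneg _)
                (by linarith [abs_nonneg c])
          _ = 1 := by ring
      have hstep := step_lemma (μ := μ) hmB X v (y (b+1)) hXm
        (Filter.Eventually.of_forall fun ω => (Real.exp_pos _).le) hXb hvm hvbdd
        (hym0 (b+1) (by omega) hbn) (hybdd (b+1) (by omega) hbn)
      have hL : (fun ω => Real.exp (∑ t ∈ Finset.Icc a (b+1),
          (c * w t ω * (y t ω - (μ[y t|H (t - 1)]) ω) - c ^ 2 * (w t ω) ^ 2)))
          = fun ω => X ω * Real.exp (v ω * (y (b+1) ω - (μ[y (b+1)|H b]) ω)) := by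
        funext ω
        rw [Finset.sum_Icc_succ_top hab, hXdef, hvdef, ← Real.exp_add]
        congr 1
        have : (b + 1) - 1 = b := by omega
        rw [this]
        ring
      have hR : (fun ω => X ω * Real.exp ((v ω) ^ 2)) = fun ω => Real.exp (S ω) := by
        funext ω
        rw [hXdef, hvdef, ← Real.exp_add, mul_pow]
        ring_nf
      calc ∫ ω, Real.exp (∑ t ∈ Finset.Icc a (b+1),
            (c * w t ω * (y t ω - (μ[y t|H (t - 1)]) ω) - c ^ 2 * (w t ω) ^ 2)) ∂μ
          = ∫ ω, X ω * Real.exp (v ω * (y (b+1) ω - (μ[y (b+1)|H b]) ω)) ∂μ := by rw [hL]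
        _ ≤ ∫ ω, X ω * Real.exp ((v ω) ^ 2) ∂μ := hstep
        _ = ∫ ω, Real.exp (S ω) ∂μ := by rw [hR]
        _ ≤ 1 := ih hbn'

lemma bad_bound (hn : 1 ≤ n)
    (hH : ∀ t, t ≤ n → H t ≤ m0)
    (hHF : ∀ t, 1 ≤ t → t ≤ n → H (t - 1) ≤ F t)
    (hFH : ∀ t, 1 ≤ t → t ≤ n → F t ≤ H t)
    (hwmeas : ∀ t, 1 ≤ t → t ≤ n → Measurable[H (t - 1)] (w t))
    (hwbdd : ∀ t, 1 ≤ t → t ≤ n → ∀ᵐ ω ∂μ, w t ω ∈ Set.Icc (0 : ℝ) 1)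
    (hymeas : ∀ t, 1 ≤ t → t ≤ n → Measurable[F t] (y t))
    (hybdd : ∀ t, 1 ≤ t → t ≤ n → ∀ᵐ ω ∂μ, y t ω ∈ Set.Icc (0 : ℝ) 1)
    (c : ℝ) (hc : |c| ≤ 1) (a b : ℕ) (ha : 1 ≤ a) (hb : b ≤ n) (Λ : ℝ) :
    μ {ω | Λ < ∑ t ∈ Finset.Icc a b,
        (c * w t ω * (y t ω - (μ[y t|H (t - 1)]) ω) - c ^ 2 * (w t ω) ^ 2)}
      ≤ ENNReal.ofReal (Real.exp (-Λ)) := by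
  set S : Ω → ℝ := fun ω => ∑ t ∈ Finset.Icc a b,
    (c * w t ω * (y t ω - (μ[y t|H (t - 1)]) ω) - c ^ 2 * (w t ω) ^ 2) with hSdef
  set f : Ω → ℝ := fun ω => Real.exp (S ω) with hfdef
  have hint : ∫ ω, f ω ∂μ ≤ 1 :=
    chain_lemma hn hH hHF hFH hwmeas hwbdd hymeas hybdd c hc a ha b hb
  have hSm : Measurable[m0] S := by
    apply Finset.measurable_sum
    intro t ht
    rw [Finset.mem_Icc] at ht
    have h1t : 1 ≤ t := le_trans ha ht.1
    have htn : t ≤ n := le_trans ht.2 hb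
    have hwm : Measurable[m0] (w t) := (hwmeas t h1t htn).mono (hH (t-1) (by omega)) le_rfl
    have hym : Measurable[m0] (y t) :=
      (hymeas t h1t htn).mono ((hFH t h1t htn).trans (hH t htn)) le_rfl
    have hpm : Measurable[m0] (μ[y t|H (t-1)]) :=
      (stronglyMeasurable_condExp.mono (hH (t-1) (by omega))).measurable
    exact ((measurable_const.mul hwm).mul (hym.sub hpm)).sub
      (measurable_const.mul (hwm.pow_const 2))
  have hfm : Measurable[m0] f := hSm.exp
  -- boundedness of S a.e. (coarse bound)
  have hgood : ∀ᵐ ω ∂μ, ∀ t, 1 ≤ t → t ≤ n →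
      w t ω ∈ Set.Icc (0:ℝ) 1 ∧ y t ω ∈ Set.Icc (0:ℝ) 1 ∧
        (μ[y t|H (t-1)]) ω ∈ Set.Icc (0:ℝ) 1 := by
    rw [ae_all_iff]
    intro t
    by_cases ht : 1 ≤ t ∧ t ≤ n
    · have hym : Measurable[m0] (y t) :=
        (hymeas t ht.1 ht.2).mono ((hFH t ht.1 ht.2).trans (hH t ht.2)) le_rfl
      have hyint : Integrable (y t) μ := integrable_of_bdd'
        hym.aestronglyMeasurable (C := 1)
        ((hybdd t ht.1 ht.2).mono fun ω h => abs_le.2 ⟨by linarith [h.1], h.2⟩)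
      have hp0 : ∀ᵐ ω ∂μ, 0 ≤ (μ[y t|H (t-1)]) ω := by
        filter_upwards [condExp_nonneg (m := H (t-1))
          ((hybdd t ht.1 ht.2).mono fun ω h => h.1)] with ω h using h
      have hp1 : ∀ᵐ ω ∂μ, (μ[y t|H (t-1)]) ω ≤ 1 := by
        have h := condExp_mono (m := H (t-1)) hyint (integrable_const (1:ℝ))
          ((hybdd t ht.1 ht.2).mono fun ω h => h.2)
        rwa [condExp_const (hH (t-1) (by omega))] at h
      filter_upwards [hwbdd t ht.1 ht.2, hybdd t ht.1 ht.2, hp0, hp1] with ω h1 h2 h3 h4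
      exact fun _ _ => ⟨h1, h2, ⟨h3, h4⟩⟩
    · filter_upwards with ω h1 h2
      exact absurd ⟨h1, h2⟩ ht
  have hSb : ∀ᵐ ω ∂μ, |S ω| ≤ 2 * n := by
    filter_upwards [hgood] with ω hω
    calc |S ω| ≤ ∑ t ∈ Finset.Icc a b,
        |c * w t ω * (y t ω - (μ[y t|H (t - 1)]) ω) - c ^ 2 * (w t ω) ^ 2| :=
          Finset.abs_sum_le_sum_abs _ _
      _ ≤ ∑ t ∈ Finset.Icc a b, 2 := by
          apply Finset.sum_le_sum
          intro t ht
          rw [Finset.mem_Icc] at ht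
          obtain ⟨hw01, hy01, hp01⟩ := hω t (by omega) (by omega)
          have h1 : |c * w t ω * (y t ω - (μ[y t|H (t - 1)]) ω)| ≤ 1 := by
            rw [abs_mul, abs_mul]
            have e1 : |w t ω| ≤ 1 := abs_le.2 ⟨by linarith [hw01.1], hw01.2⟩
            have e2 : |y t ω - (μ[y t|H (t - 1)]) ω| ≤ 1 :=
              abs_le.2 ⟨by linarith [hy01.1, hp01.2], by linarith [hy01.2, hp01.1]⟩
            calc |c| * |w t ω| * |y t ω - (μ[y t|H (t - 1)]) ω| ≤ 1 * 1 * 1 := by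
                  apply mul_le_mul (mul_le_mul hc e1 (abs_nonneg _) (by linarith [abs_nonneg c]))
                    e2 (abs_nonneg _) (by norm_num)
              _ = 1 := by ring
          have h2 : |c ^ 2 * (w t ω) ^ 2| ≤ 1 := by
            rw [abs_of_nonneg (by positivity : (0:ℝ) ≤ c ^ 2 * (w t ω) ^ 2)]
            have e1 : c ^ 2 ≤ 1 := by nlinarith [sq_abs c, abs_nonneg c]
            nlinarith [hw01.1, hw01.2, sq_nonneg (w t ω)]
          calc |c * w t ω * (y t ω - (μ[y t|H (t - 1)]) ω) - c ^ 2 * (w t ω) ^ 2|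
              ≤ |c * w t ω * (y t ω - (μ[y t|H (t - 1)]) ω)| + |c ^ 2 * (w t ω) ^ 2| :=
                abs_sub _ _
            _ ≤ 2 := by linarith
      _ = (Finset.Icc a b).card * 2 := by rw [Finset.sum_const, nsmul_eq_mul]
      _ ≤ n * 2 := by
          have : (Finset.Icc a b).card ≤ n := by
            rw [Nat.card_Icc]
            omega
          exact_mod_cast Nat.mul_le_mul_right 2 this
      _ = 2 * n := by ring
  have hfint : Integrable f μ := integrable_of_bdd' hfm.aestronglyMeasurable
    (C := Real.exp (2 * n))
    (hSb.mono fun ω h => by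
      rw [abs_of_pos (Real.exp_pos _)]
      exact Real.exp_le_exp.2 (abs_le.1 h).2)
  have hmarkov := mul_meas_ge_le_integral_of_nonneg
    (μ := μ) (f := f) (Filter.Eventually.of_forall fun ω => (Real.exp_pos _).le)
    hfint (Real.exp Λ)
  have hsub : {ω | Λ < S ω} ⊆ {ω | Real.exp Λ ≤ f ω} := fun ω h =>
    Real.exp_le_exp.2 (le_of_lt h)
  have hfin : μ {ω | Real.exp Λ ≤ f ω} ≠ ⊤ := measure_ne_top μ _
  have htr : (μ {ω | Real.exp Λ ≤ f ω}).toReal ≤ Real.exp (-Λ) := by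
    have h1 : Real.exp Λ * (μ {ω | Real.exp Λ ≤ f ω}).toReal ≤ 1 := le_trans hmarkov hint
    rw [Real.exp_neg, inv_eq_one_div, le_div_iff₀ (Real.exp_pos Λ)]
    nlinarith [h1]
  have : μ {ω | Real.exp Λ ≤ f ω} ≤ ENNReal.ofReal (Real.exp (-Λ)) := by
    rw [← ENNReal.ofReal_toReal hfin]
    exact ENNReal.ofReal_le_ofReal htr
  exact le_trans (measure_mono hsub) this


end Chain


lemma det_lemma (Λ W M : ℝ) (hΛ : 1/2 ≤ Λ) (hW0 : 0 ≤ W) (J : ℕ) (hWJ : W ≤ 2 ^ J)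
    (h : ∀ j, j ≤ J → min 1 (Real.sqrt (Λ / 2 ^ j)) * M ≤
        (min 1 (Real.sqrt (Λ / 2 ^ j))) ^ 2 * W + Λ) :
    M ≤ 4 * (Real.sqrt (Λ * W) + Λ) := by
  have hΛ0 : (0:ℝ) < Λ := by linarith
  classical
  have hex : ∃ k, W ≤ 2 ^ k := ⟨J, hWJ⟩
  set j := Nat.find hex with hjdef
  have hj : W ≤ 2 ^ j := Nat.find_spec hex
  have hjJ : j ≤ J := Nat.find_min' hex hWJ
  have h2j : (0:ℝ) < 2 ^ j := by positivity
  have hc := h j hjJ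
  have ht0 : 0 ≤ Real.sqrt (Λ * W) := Real.sqrt_nonneg _
  set t := Real.sqrt (Λ * W) with htdef
  have ht2 : t ^ 2 = Λ * W := Real.sq_sqrt (by positivity)
  rcases le_or_gt 1 (Real.sqrt (Λ / 2 ^ j)) with hcase | hcase
  · rw [min_eq_left hcase] at hc
    have h1 : (1:ℝ) ≤ Λ / 2 ^ j := by
      nlinarith [Real.sq_sqrt (by positivity : (0:ℝ) ≤ Λ / 2 ^ j),
        Real.sqrt_nonneg (Λ / 2 ^ j)]
    have h2 : (2:ℝ) ^ j ≤ Λ := by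
      rw [le_div_iff₀ h2j] at h1
      linarith
    nlinarith
  · set c := Real.sqrt (Λ / 2 ^ j) with hcdef
    have hcpos : 0 < c := Real.sqrt_pos.2 (by positivity)
    rw [min_eq_right hcase.le] at hc
    have hc2 : c ^ 2 = Λ / 2 ^ j := Real.sq_sqrt (by positivity)
    set s := Real.sqrt (Λ * 2 ^ j) with hsdef
    have hs0 : 0 ≤ s := Real.sqrt_nonneg _
    have hs2 : s ^ 2 = Λ * 2 ^ j := Real.sq_sqrt (by positivity)
    have hcs : c * s = Λ := by
      rw [hcdef, hsdef, ← Real.sqrt_mul (by positivity)]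
      rw [show Λ / 2 ^ j * (Λ * 2 ^ j) = Λ ^ 2 by field_simp]
      exact Real.sqrt_sq hΛ0.le
    have hc2j : c * 2 ^ j = s := by
      have hsq : (c * 2 ^ j) ^ 2 = s ^ 2 := by
        rw [mul_pow, hc2, hs2]; field_simp
      have h1 : c * 2 ^ j = Real.sqrt ((c * 2 ^ j) ^ 2) :=
        (Real.sqrt_sq (by positivity)).symm
      rw [h1, hsq, Real.sqrt_sq hs0]
    have hM2s : M ≤ 2 * s := by
      have h1 : c * M ≤ c ^ 2 * W + c * s := by rw [hcs]; exact hc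
      have h2 : c * W ≤ c * 2 ^ j := by nlinarith
      nlinarith
    rcases Nat.eq_zero_or_pos j with hj0 | hjpos
    · have hsΛ : s ^ 2 = Λ := by rw [hs2, hj0]; norm_num
      nlinarith [sq_nonneg (s - 1/2), sq_nonneg s]
    · have hneg : ¬ (W ≤ 2 ^ (j - 1)) := Nat.find_min hex (by omega)
      push_neg at hneg
      have h2pow : (2:ℝ) ^ j = 2 * 2 ^ (j - 1) := by
        rw [← pow_succ']
        congr 1
        omega
      have hst : s ^ 2 ≤ 2 * t ^ 2 := by
        rw [hs2, ht2, h2pow]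
        nlinarith
      have hs2t : s ≤ 2 * t := by
        have h1 : s ≤ Real.sqrt ((2 * t) ^ 2) := by
          rw [← Real.sqrt_sq hs0]
          exact Real.sqrt_le_sqrt (by nlinarith)
        rwa [Real.sqrt_sq (by positivity)] at h1
      linarith

end Aux

/-- **Uniform concentration over contiguous blocks.** With a two-stage filtration
`H (t-1) ≤ F t ≤ H t` of length `n ≥ 1`, predictable weights `w t ∈ [0,1]`
(`H (t-1)`-measurable) and outcomes `y t ∈ [0,1]` (`F t`-measurable) with conditional means
`μ_t = E[y t | H (t-1)]`, for every `δ ∈ (0,1)`, with probability at least `1 - δ`,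
simultaneously for every contiguous block `{a, ..., b} ⊆ {1, ..., n}`:
`|∑_{t∈S} w t (y t - μ_t)| ≤ 4 (√(Λ ∑_{t∈S} w t) + Λ)` where
`Λ = log (2 n² (⌈log₂ n⌉ + 1) / δ)`. -/
theorem uniform_block_concentration
    {Ω : Type*} {m0 : MeasurableSpace Ω} (μ : Measure Ω) [IsProbabilityMeasure μ]
    (n : ℕ) (hn : 1 ≤ n) (H F : ℕ → MeasurableSpace Ω)
    (hH : ∀ t, t ≤ n → H t ≤ m0)
    (hHF : ∀ t, 1 ≤ t → t ≤ n → H (t - 1) ≤ F t)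
    (hFH : ∀ t, 1 ≤ t → t ≤ n → F t ≤ H t)
    (w y : ℕ → Ω → ℝ)
    (hwmeas : ∀ t, 1 ≤ t → t ≤ n → Measurable[H (t - 1)] (w t))
    (hwbdd : ∀ t, 1 ≤ t → t ≤ n → ∀ᵐ ω ∂μ, w t ω ∈ Set.Icc (0 : ℝ) 1)
    (hymeas : ∀ t, 1 ≤ t → t ≤ n → Measurable[F t] (y t))
    (hybdd : ∀ t, 1 ≤ t → t ≤ n → ∀ᵐ ω ∂μ, y t ω ∈ Set.Icc (0 : ℝ) 1)
    (δ : ℝ) (hδ0 : 0 < δ) (hδ1 : δ < 1) :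
    ENNReal.ofReal (1 - δ) ≤
      μ {ω | ∀ a b : ℕ, 1 ≤ a → a ≤ b → b ≤ n →
          |∑ t ∈ Finset.Icc a b, w t ω * (y t ω - (μ[y t | H (t - 1)]) ω)| ≤
            4 * (Real.sqrt
                  ((Real.log (2 * (n : ℝ) ^ 2 * ((⌈Real.logb 2 (n : ℝ)⌉ : ℝ) + 1) / δ)) *
                    ∑ t ∈ Finset.Icc a b, w t ω) +
                Real.log (2 * (n : ℝ) ^ 2 * ((⌈Real.logb 2 (n : ℝ)⌉ : ℝ) + 1) / δ))} := by
  classical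
  -- preliminaries
  set r : ℤ := ⌈Real.logb 2 (n:ℝ)⌉ with hrdef
  have hnR : (1:ℝ) ≤ (n:ℝ) := by exact_mod_cast hn
  have hr0 : 0 ≤ r := Int.ceil_nonneg (Real.logb_nonneg (by norm_num) hnR)
  set J : ℕ := r.toNat with hJdef
  have hrJ : (r:ℝ) = (J:ℝ) := by
    rw [hJdef]
    exact_mod_cast (Int.toNat_of_nonneg hr0).symm
  set A : ℝ := 2 * (n:ℝ)^2 * ((r:ℝ)+1) / δ with hAdef
  have hA2 : 2 ≤ A := by
    rw [hAdef, le_div_iff₀ hδ0]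
    have h1 : (1:ℝ) ≤ (n:ℝ)^2 := by nlinarith
    have h2 : (1:ℝ) ≤ (r:ℝ) + 1 := by
      have : (0:ℝ) ≤ (r:ℝ) := by exact_mod_cast hr0
      linarith
    nlinarith
  have hA0 : 0 < A := by linarith
  set Λ : ℝ := Real.log A with hΛdef
  have hΛhalf : 1/2 ≤ Λ := by
    have h1 : Real.log 2 ≤ Real.log A := Real.log_le_log (by norm_num) hA2
    have h2 := Real.log_two_gt_d9
    linarith
  have hexpΛ : Real.exp (-Λ) = δ / (2 * (n:ℝ)^2 * ((r:ℝ)+1)) := by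
    rw [hΛdef, Real.exp_neg, Real.exp_log hA0, hAdef, inv_div]
  have hn2J : (n:ℝ) ≤ 2 ^ J := by
    have h1 : (n:ℝ) = (2:ℝ) ^ (Real.logb 2 (n:ℝ)) :=
      (Real.rpow_logb (by norm_num) (by norm_num) (by linarith)).symm
    have h2 : (2:ℝ) ^ (Real.logb 2 (n:ℝ)) ≤ (2:ℝ) ^ ((r:ℝ)) :=
      Real.rpow_le_rpow_of_exponent_le (by norm_num) (Int.le_ceil _)
    have h3 : (2:ℝ) ^ ((r:ℝ)) = (2:ℝ) ^ ((J:ℝ)) := by rw [hrJ]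
    rw [Real.rpow_natCast] at h3
    linarith [h1, h2, h3.le]
  -- bad events
  set cf : ℕ → ℝ := fun j => min 1 (Real.sqrt (Λ / 2 ^ j)) with hcfdef
  have hcf0 : ∀ j, 0 ≤ cf j := fun j => le_min zero_le_one (Real.sqrt_nonneg _)
  have hcf1 : ∀ j, cf j ≤ 1 := fun j => min_le_left _ _
  set B : ℕ × ℕ × ℕ × ℝ → Set Ω := fun i =>
    {ω | Λ < ∑ t ∈ Finset.Icc i.1 i.2.1,
      ((i.2.2.2 * cf i.2.2.1) * w t ω * (y t ω - (μ[y t|H (t - 1)]) ω)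
        - (i.2.2.2 * cf i.2.2.1) ^ 2 * (w t ω) ^ 2)} with hBdef
  set I : Finset (ℕ × ℕ × ℕ × ℝ) :=
    (Finset.Icc 1 n) ×ˢ ((Finset.Icc 1 n) ×ˢ ((Finset.range (J+1)) ×ˢ ({1, -1} : Finset ℝ)))
    with hIdef
  have hIcard : I.card = n * (n * ((J+1) * 2)) := by
    rw [hIdef, Finset.card_product, Finset.card_product, Finset.card_product,
      Finset.card_pair (show (1:ℝ) ≠ -1 by norm_num)]
    simp [Nat.card_Icc]
  have hImem : ∀ i : ℕ × ℕ × ℕ × ℝ, i ∈ I ↔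
      (1 ≤ i.1 ∧ i.1 ≤ n) ∧ (1 ≤ i.2.1 ∧ i.2.1 ≤ n) ∧ i.2.2.1 < J + 1 ∧
        (i.2.2.2 = 1 ∨ i.2.2.2 = -1) := by
    intro i
    simp [hIdef, Finset.mem_product, Finset.mem_Icc, Finset.mem_range]
  -- each bad event is small
  have hbad : ∀ i ∈ I, μ (B i) ≤ ENNReal.ofReal (Real.exp (-Λ)) := by
    intro i hi
    rw [hImem] at hi
    obtain ⟨⟨ha1, han⟩, ⟨hb1, hbn⟩, hj, hs⟩ := hi
    have hcabs : |i.2.2.2 * cf i.2.2.1| ≤ 1 := by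
      rw [abs_mul]
      have h1 : |i.2.2.2| = 1 := by rcases hs with h | h <;> rw [h] <;> norm_num
      rw [h1, one_mul, abs_of_nonneg (hcf0 _)]
      exact hcf1 _
    exact bad_bound hn hH hHF hFH hwmeas hwbdd hymeas hybdd
      (i.2.2.2 * cf i.2.2.1) hcabs i.1 i.2.1 ha1 hbn Λ
  -- union bound
  have hunion : μ (⋃ i ∈ I, B i) ≤ ENNReal.ofReal δ := by
    calc μ (⋃ i ∈ I, B i) ≤ ∑ i ∈ I, μ (B i) := measure_biUnion_finset_le I B
      _ ≤ ∑ i ∈ I, ENNReal.ofReal (Real.exp (-Λ)) := Finset.sum_le_sum hbad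
      _ = (I.card : ENNReal) * ENNReal.ofReal (Real.exp (-Λ)) := by
          rw [Finset.sum_const, nsmul_eq_mul]
      _ = ENNReal.ofReal ((I.card : ℝ) * Real.exp (-Λ)) := by
          rw [ENNReal.ofReal_mul (by positivity), ENNReal.ofReal_natCast]
      _ = ENNReal.ofReal δ := by
          congr 1
          rw [hexpΛ, hIcard, hrJ]
          have hnne : (n:ℝ) ≠ 0 := by positivity
          have hJne : ((J:ℝ)+1) ≠ 0 := by positivity
          field_simp
          push_cast
          ring
  -- a.e. good bounds
  have hgood : ∀ᵐ ω ∂μ, ∀ t, 1 ≤ t → t ≤ n →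
      w t ω ∈ Set.Icc (0:ℝ) 1 ∧ y t ω ∈ Set.Icc (0:ℝ) 1 ∧
        (μ[y t|H (t-1)]) ω ∈ Set.Icc (0:ℝ) 1 := by
    rw [ae_all_iff]
    intro t
    by_cases ht : 1 ≤ t ∧ t ≤ n
    · have hym : Measurable[m0] (y t) :=
        (hymeas t ht.1 ht.2).mono ((hFH t ht.1 ht.2).trans (hH t ht.2)) le_rfl
      have hyint : Integrable (y t) μ := integrable_of_bdd'
        hym.aestronglyMeasurable (C := 1)
        ((hybdd t ht.1 ht.2).mono fun ω h => abs_le.2 ⟨by linarith [h.1], h.2⟩)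
      have hp0 : ∀ᵐ ω ∂μ, 0 ≤ (μ[y t|H (t-1)]) ω := by
        filter_upwards [condExp_nonneg (m := H (t-1))
          ((hybdd t ht.1 ht.2).mono fun ω h => h.1)] with ω h using h
      have hp1 : ∀ᵐ ω ∂μ, (μ[y t|H (t-1)]) ω ≤ 1 := by
        have h := condExp_mono (m := H (t-1)) hyint (integrable_const (1:ℝ))
          ((hybdd t ht.1 ht.2).mono fun ω h => h.2)
        rwa [condExp_const (hH (t-1) (by omega))] at h
      filter_upwards [hwbdd t ht.1 ht.2, hybdd t ht.1 ht.2, hp0, hp1] with ω h1 h2 h3 h4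
      exact fun _ _ => ⟨h1, h2, ⟨h3, h4⟩⟩
    · filter_upwards with ω h1 h2
      exact absurd ⟨h1, h2⟩ ht
  -- deterministic part: complement of bad union (a.e.) is inside the good set
  set Good : Set Ω := {ω | ∀ a b : ℕ, 1 ≤ a → a ≤ b → b ≤ n →
      |∑ t ∈ Finset.Icc a b, w t ω * (y t ω - (μ[y t | H (t - 1)]) ω)| ≤
        4 * (Real.sqrt (Λ * ∑ t ∈ Finset.Icc a b, w t ω) + Λ)} with hGdef
  have hincl : ∀ᵐ ω ∂μ, ω ∈ (⋃ i ∈ I, B i)ᶜ → ω ∈ Good := by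
    filter_upwards [hgood] with ω gω hω
    have hnot : ∀ i ∈ I, ω ∉ B i := fun i hi hmem => hω (Set.mem_biUnion hi hmem)
    intro a b ha hab hbn
    set W : ℝ := ∑ t ∈ Finset.Icc a b, w t ω with hWdef
    set M : ℝ := ∑ t ∈ Finset.Icc a b, w t ω * (y t ω - (μ[y t | H (t - 1)]) ω) with hMdef
    have hW0 : 0 ≤ W := Finset.sum_nonneg fun t ht => by
      rw [Finset.mem_Icc] at ht
      exact (gω t (by omega) (by omega)).1.1
    have hWn : W ≤ (n:ℝ) := by
      calc W ≤ ∑ _t ∈ Finset.Icc a b, (1:ℝ) := Finset.sum_le_sum fun t ht => by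
            rw [Finset.mem_Icc] at ht
            exact (gω t (by omega) (by omega)).1.2
        _ = ((Finset.Icc a b).card : ℝ) := by rw [Finset.sum_const]; simp
        _ ≤ (n:ℝ) := by
            have : (Finset.Icc a b).card ≤ n := by rw [Nat.card_Icc]; omega
            exact_mod_cast this
    have hWJ : W ≤ 2 ^ J := le_trans hWn hn2J
    -- key: for each sign s and j ≤ J, the supermartingale bound
    have hkey : ∀ s : ℝ, (s = 1 ∨ s = -1) → ∀ j, j ≤ J →
        cf j * (s * M) ≤ (cf j) ^ 2 * W + Λ := by
      intro s hs j hj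
      have hmem : (a, b, j, s) ∈ I := by
        rw [hImem]
        exact ⟨⟨ha, le_trans hab hbn⟩, ⟨le_trans ha hab, hbn⟩, Nat.lt_succ_of_le hj, hs⟩
      have hnb := hnot _ hmem
      rw [hBdef] at hnb
      simp only [Set.mem_setOf_eq, not_lt] at hnb
      set c : ℝ := s * cf j with hcdef
      have hsum1 : ∑ t ∈ Finset.Icc a b, c * w t ω * (y t ω - (μ[y t|H (t - 1)]) ω)
          = c * M := by
        rw [hMdef, Finset.mul_sum]
        exact Finset.sum_congr rfl fun t _ => by ring
      have hsum2 : ∑ t ∈ Finset.Icc a b, c ^ 2 * (w t ω) ^ 2 ≤ c ^ 2 * W := by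
        rw [hWdef, Finset.mul_sum]
        apply Finset.sum_le_sum
        intro t ht
        rw [Finset.mem_Icc] at ht
        obtain ⟨hw0, hw1⟩ := (gω t (le_trans ha ht.1) (le_trans ht.2 hbn)).1
        exact mul_le_mul_of_nonneg_left (by nlinarith) (sq_nonneg c)
      have hsplit : ∑ t ∈ Finset.Icc a b,
          (c * w t ω * (y t ω - (μ[y t|H (t - 1)]) ω) - c ^ 2 * (w t ω) ^ 2)
          = c * M - ∑ t ∈ Finset.Icc a b, c ^ 2 * (w t ω) ^ 2 := by
        rw [Finset.sum_sub_distrib, hsum1]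
      rw [hsplit] at hnb
      have hc2 : c ^ 2 = (cf j) ^ 2 := by
        rcases hs with h | h <;> rw [hcdef, h] <;> ring
      have hcM : c * M = cf j * (s * M) := by rw [hcdef]; ring
      rw [hc2] at hsum2
      rw [hcM, hc2] at hnb
      linarith
    have hup : M ≤ 4 * (Real.sqrt (Λ * W) + Λ) := by
      apply det_lemma Λ W M hΛhalf hW0 J hWJ
      intro j hj
      have h := hkey 1 (Or.inl rfl) j hj
      rw [one_mul] at h
      exact h
    have hdown : -M ≤ 4 * (Real.sqrt (Λ * W) + Λ) := by
      apply det_lemma Λ W (-M) hΛhalf hW0 J hWJ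
      intro j hj
      have h := hkey (-1) (Or.inr rfl) j hj
      rw [neg_one_mul] at h
      exact h
    exact abs_le.2 ⟨by linarith, hup⟩
  -- measurability of the union
  have hBmeas : ∀ i ∈ I, MeasurableSet[m0] (B i) := by
    intro i hi
    rw [hImem] at hi
    obtain ⟨⟨ha1, han⟩, ⟨hb1, hbn⟩, _, _⟩ := hi
    have hSm : Measurable[m0] (fun ω => ∑ t ∈ Finset.Icc i.1 i.2.1,
        ((i.2.2.2 * cf i.2.2.1) * w t ω * (y t ω - (μ[y t|H (t - 1)]) ω)
          - (i.2.2.2 * cf i.2.2.1) ^ 2 * (w t ω) ^ 2)) := by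
      apply Finset.measurable_sum
      intro t ht
      rw [Finset.mem_Icc] at ht
      have h1t : 1 ≤ t := le_trans ha1 ht.1
      have htn : t ≤ n := le_trans ht.2 hbn
      have hwm : Measurable[m0] (w t) := (hwmeas t h1t htn).mono (hH (t-1) (by omega)) le_rfl
      have hym : Measurable[m0] (y t) :=
        (hymeas t h1t htn).mono ((hFH t h1t htn).trans (hH t htn)) le_rfl
      have hpm : Measurable[m0] (μ[y t|H (t-1)]) :=
        (stronglyMeasurable_condExp.mono (hH (t-1) (by omega))).measurable
      exact ((measurable_const.mul hwm).mul (hym.sub hpm)).sub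
        (measurable_const.mul (hwm.pow_const 2))
    exact measurableSet_lt measurable_const hSm
  have hUmeas : MeasurableSet[m0] (⋃ i ∈ I, B i) :=
    I.measurableSet_biUnion hBmeas
  -- conclude
  have h1 : μ ((⋃ i ∈ I, B i)ᶜ) ≤ μ Good := by
    apply measure_mono_ae
    filter_upwards [hincl] with ω h using h
  have h2 : μ ((⋃ i ∈ I, B i)ᶜ) = 1 - μ (⋃ i ∈ I, B i) :=
    prob_compl_eq_one_sub hUmeas
  calc ENNReal.ofReal (1 - δ) = 1 - ENNReal.ofReal δ := by
        rw [ENNReal.ofReal_sub _ hδ0.le, ENNReal.ofReal_one]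
    _ ≤ 1 - μ (⋃ i ∈ I, B i) := tsub_le_tsub_left hunion 1
    _ = μ ((⋃ i ∈ I, B i)ᶜ) := h2.symm
    _ ≤ μ Good := h1
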